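/- With U as above, for n > m ≥ 1 one has U(f_m, f_n) = (1/2)[(λ_{n,m} + λ_{m,n}) g_{n+m} + ((n+m)/2) g_{n-m}], U(f_m, g_n) = (1/2)[-((n+m)/2) f_{n-m} - (λ_{n,m}+λ_{m,n}) f_{n+m}], and U(g_m, g_n) = (1/2)[((n+m)/2) g_{n-m} - (λ_{n,m}+λ_{m,n}) g_{n+m}]. -/
import Mathlib


/-- index type for the basis `{f_{k+1}} ∪ {g_{k+1}}` of `diff_0(S¹)`:
`Sum.inl k` stands for `f_{k+1} = cos((k+1)t)`, `Sum.inr k` for `g_{k+1} = sin((k+1)t)`. -/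
abbrev Idx := ℕ ⊕ ℕ

/-- `diff_0(S¹)`, modelled as the free vector space on the basis `{f_k, g_k : k ≥ 1}`. -/
abbrev V := Idx →₀ ℝ

/-- `f_k = cos(kt)` as an element of `diff_0(S¹)` (with `f_0` projected to `0`). -/
noncomputable def Fb : ℕ → V := fun k =>
  if k = 0 then 0 else Finsupp.single (Sum.inl (k - 1)) 1

/-- `g_k = sin(kt)` as an element of `diff_0(S¹)` (with `g_0 = 0`). -/
noncomputable def Gb : ℕ → V := fun k =>
  if k = 0 then 0 else Finsupp.single (Sum.inr (k - 1)) 1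

/-- `θ_k = 2hk + (c/12)(k³ - k)` -/
noncomputable def th (c h : ℝ) (k : ℤ) : ℝ := 2 * h * k + c / 12 * ((k : ℝ) ^ 3 - k)

/-- `λ_{m,n} = (2n+m)θ_m / (2θ_{m+n})` -/
noncomputable def lam (c h : ℝ) (m n : ℤ) : ℝ :=
  (2 * (n : ℝ) + m) * th c h m / (2 * th c h (m + n))

/-- `|M - N|` for natural numbers -/
def dN (M N : ℕ) : ℕ := max M N - min M N

/-- `sign (M - N)` -/
noncomputable def sg (M N : ℕ) : ℝ := if N < M then 1 else -1

/-- the projected bracket `[·,·]_m` on basis elements, given by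
`[f_M, f_N]_m = ((M-N)/2) g_{M+N} + ((M+N)/2) sign(M-N) g_{|M-N|}`,
`[g_M, g_N]_m = ((N-M)/2) g_{M+N} + ((M+N)/2) sign(M-N) g_{|M-N|}`,
`[f_M, g_N]_m = ((N-M)/2) f_{M+N} + ((M+N)/2) f_{|M-N|}` (the `f_0` term being projected away),
and `[g_M, f_N]_m = -[f_N, g_M]_m`. -/
noncomputable def brB : Idx → Idx → V
  | Sum.inl m, Sum.inl n =>
      (((m : ℝ) - n) / 2) • Gb (m + n + 2)
        + (((m : ℝ) + n + 2) / 2 * sg (m + 1) (n + 1)) • Gb (dN (m + 1) (n + 1))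
  | Sum.inl m, Sum.inr n =>
      (((n : ℝ) - m) / 2) • Fb (m + n + 2)
        + (((m : ℝ) + n + 2) / 2) • Fb (dN (m + 1) (n + 1))
  | Sum.inr m, Sum.inl n =>
      -((((m : ℝ) - n) / 2) • Fb (m + n + 2)
        + (((m : ℝ) + n + 2) / 2) • Fb (dN (m + 1) (n + 1)))
  | Sum.inr m, Sum.inr n =>
      (((n : ℝ) - m) / 2) • Gb (m + n + 2)
        + (((m : ℝ) + n + 2) / 2 * sg (m + 1) (n + 1)) • Gb (dN (m + 1) (n + 1))

/-- bilinear extension of a map given on basis elements -/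
noncomputable def bil (φ : Idx → Idx → V) (x y : V) : V :=
  x.sum fun i a => y.sum fun j b => (a * b) • φ i j

/-- the projected (mean-zero) bracket `[·,·]_m` on `diff_0(S¹)` -/
noncomputable def brm : V → V → V := bil brB

/-- the inner product `B` on basis elements: `B(f_M, f_N) = B(g_M, g_N) = (θ_M/2)δ_{M,N}`,
`B(f_M, g_N) = 0`. -/
noncomputable def ipB (c h : ℝ) : Idx → Idx → ℝ
  | Sum.inl m, Sum.inl n => if m = n then th c h (m + 1) / 2 else 0
  | Sum.inr m, Sum.inr n => if m = n then th c h (m + 1) / 2 else 0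
  | _, _ => 0

/-- the inner product `B(f,g) = ω_{c,h}(f, Jg)` on `diff_0(S¹)` -/
noncomputable def Bf (c h : ℝ) (x y : V) : ℝ :=
  x.sum fun i a => y.sum fun j b => a * b * ipB c h i j

lemma th_pos (c h : ℝ) (hc : 0 < c) (hh : 0 < h) (k : ℤ) (hk : 1 ≤ k) : 0 < th c h k := by
  have hk' : (1:ℝ) ≤ (k:ℝ) := by exact_mod_cast hk
  have h1 : (0:ℝ) < 2 * h * k := by nlinarith
  have h2 : (0:ℝ) ≤ (k:ℝ)^3 - k := by
    nlinarith [mul_nonneg (mul_nonneg (by linarith : (0:ℝ) ≤ (k:ℝ) - 1)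
      (by linarith : (0:ℝ) ≤ (k:ℝ))) (by linarith : (0:ℝ) ≤ (k:ℝ) + 1)]
  have h3 : (0:ℝ) ≤ c / 12 * ((k:ℝ)^3 - k) := by positivity
  unfold th; linarith

lemma ipB_off (c h : ℝ) {i j : Idx} (hne : i ≠ j) : ipB c h i j = 0 := by
  cases i <;> cases j <;> simp_all [ipB]

lemma ipB_diag_pos (c h : ℝ) (hc : 0 < c) (hh : 0 < h) (i : Idx) : 0 < ipB c h i i := by
  cases i with
  | inl k => have := th_pos c h hc hh (k + 1) (by omega); simp [ipB]; linarith
  | inr k => have := th_pos c h hc hh (k + 1) (by omega); simp [ipB]; linarith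

lemma Bf_single_right (c h : ℝ) (v : V) (i : Idx) :
    Bf c h v (Finsupp.single i 1) = v i * ipB c h i i := by
  unfold Bf
  have hin : ∀ j a, (Finsupp.single i (1:ℝ)).sum (fun i' b => a * b * ipB c h j i') = a * ipB c h j i := by
    intro j a; rw [Finsupp.sum_single_index] <;> simp
  simp only [hin]
  rw [Finsupp.sum, Finset.sum_eq_single i
    (fun j _ hne => by rw [ipB_off c h hne, mul_zero])
    (fun hi => by rw [Finsupp.notMem_support_iff.mp hi, zero_mul])]

lemma Bf_single_left (c h : ℝ) (v : V) (i : Idx) :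
    Bf c h (Finsupp.single i 1) v = v i * ipB c h i i := by
  unfold Bf
  rw [Finsupp.sum_single_index (by simp [Finsupp.sum])]
  simp only [one_mul]
  rw [Finsupp.sum, Finset.sum_eq_single i
    (fun j _ hne => by rw [ipB_off c h (Ne.symm hne), mul_zero])
    (fun hi => by rw [Finsupp.notMem_support_iff.mp hi, zero_mul])]

lemma brm_single (a b : Idx) :
    brm (Finsupp.single a 1) (Finsupp.single b 1) = brB a b := by
  unfold brm bil
  rw [Finsupp.sum_single_index (by simp [Finsupp.sum]),
      Finsupp.sum_single_index (by simp)]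
  simp

lemma key (c h : ℝ) (hc : 0 < c) (hh : 0 < h) (U : V → V → V)
    (hU : ∀ x y z : V,
      Bf c h (U x y) z = (1/2) * (Bf c h (brm x z) y + Bf c h x (brm y z)))
    (a b : Idx) (w : V)
    (H : ∀ i : Idx, (1/2) * (brB a i b * ipB c h b b + brB b i a * ipB c h a a)
        = w i * ipB c h i i) :
    U (Finsupp.single a 1) (Finsupp.single b 1) = w := by
  ext i
  have h1 := hU (Finsupp.single a 1) (Finsupp.single b 1) (Finsupp.single i 1)
  rw [Bf_single_right, brm_single, brm_single, Bf_single_right, Bf_single_left] at h1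
  exact mul_right_cancel₀ (ipB_diag_pos c h hc hh i).ne' (h1.trans (H i))

lemma Fb_inl (K j : ℕ) : Fb K (Sum.inl j) = if K = j + 1 then 1 else 0 := by
  unfold Fb
  rcases Nat.eq_zero_or_pos K with rfl | hK
  · simp
  · rw [if_neg (by omega), Finsupp.single_apply]
    congr 1
    simp only [Sum.inl.injEq, eq_iff_iff]
    omega

lemma Fb_inr (K j : ℕ) : Fb K (Sum.inr j) = 0 := by
  unfold Fb; split <;> simp

lemma Gb_inr (K j : ℕ) : Gb K (Sum.inr j) = if K = j + 1 then 1 else 0 := by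
  unfold Gb
  rcases Nat.eq_zero_or_pos K with rfl | hK
  · simp
  · rw [if_neg (by omega), Finsupp.single_apply]
    congr 1
    simp only [Sum.inr.injEq, eq_iff_iff]
    omega

lemma Gb_inl (K j : ℕ) : Gb K (Sum.inl j) = 0 := by
  unfold Gb; split <;> simp

set_option maxHeartbeats 1000000 in
/-- For `n > m ≥ 1`:
`U(f_m, f_n) = (1/2)[(λ_{n,m} + λ_{m,n}) g_{n+m} + ((n+m)/2) g_{n-m}]`,
`U(f_m, g_n) = (1/2)[-((n+m)/2) f_{n-m} - (λ_{n,m} + λ_{m,n}) f_{n+m}]`,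
`U(g_m, g_n) = (1/2)[((n+m)/2) g_{n-m} - (λ_{n,m} + λ_{m,n}) g_{n+m}]`. -/
theorem U_offdiagonal (c h : ℝ) (hc : 0 < c) (hh : 0 < h) (U : V → V → V)
    (hU : ∀ x y z : V,
      Bf c h (U x y) z = (1/2) * (Bf c h (brm x z) y + Bf c h x (brm y z)))
    (m n : ℕ) (hm : 1 ≤ m) (hmn : m < n) :
    U (Fb m) (Fb n) = (1/2 : ℝ) •
      ((lam c h n m + lam c h m n) • Gb (n + m) + (((n : ℝ) + m) / 2) • Gb (n - m)) ∧
    U (Fb m) (Gb n) = (1/2 : ℝ) •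
      ((-(((n : ℝ) + m) / 2)) • Fb (n - m) + (-(lam c h n m + lam c h m n)) • Fb (n + m)) ∧
    U (Gb m) (Gb n) = (1/2 : ℝ) •
      ((((n : ℝ) + m) / 2) • Gb (n - m) + (-(lam c h n m + lam c h m n)) • Gb (n + m)) := by
  refine ⟨?_, ?_, ?_⟩
  · have hFm : Fb m = Finsupp.single (Sum.inl (m-1)) 1 := by rw [Fb]; simp [show m ≠ 0 by omega]
    have hFn : Fb n = Finsupp.single (Sum.inl (n-1)) 1 := by rw [Fb]; simp [show n ≠ 0 by omega]
    rw [hFm, hFn]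
    apply key c h hc hh U hU
    clear hU hFm hFn
    intro i
    cases i with
    | inl k =>
      simp [brB, Finsupp.add_apply, Finsupp.smul_apply, Gb_inl, Gb_inr, Fb_inl, Fb_inr, smul_eq_mul]
    | inr k =>
      simp only [brB, Finsupp.add_apply, Finsupp.smul_apply, Gb_inl, Gb_inr, Fb_inl, Fb_inr,
        smul_eq_mul, ipB, dN, sg, if_true]
      by_cases H1 : k + 1 = n + m
      · rw [if_neg (show ¬(m - 1 + k + 2 = n - 1 + 1) by omega),
            if_pos (show (m - 1 + 1) ⊔ (k + 1) - (m - 1 + 1) ⊓ (k + 1) = n - 1 + 1 by omega),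
            if_neg (show ¬(n - 1 + k + 2 = m - 1 + 1) by omega),
            if_pos (show (n - 1 + 1) ⊔ (k + 1) - (n - 1 + 1) ⊓ (k + 1) = m - 1 + 1 by omega),
            if_pos (show n + m = k + 1 by omega),
            if_neg (show ¬(n - m = k + 1) by omega)]
        obtain rfl : k = n + m - 1 := by omega
        rw [show ((n-1:ℕ):ℤ) + 1 = (n:ℤ) by omega, show ((m-1:ℕ):ℤ) + 1 = (m:ℤ) by omega,
            show ((n+m-1:ℕ):ℤ) + 1 = (n:ℤ) + m by omega,
            Nat.cast_sub hm, Nat.cast_sub (show 1 ≤ n by omega),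
            show ((n+m-1:ℕ):ℝ) = (n:ℝ) + m - 1 by push_cast [Nat.cast_sub (show 1 ≤ n + m by omega)]; ring]
        simp only [lam, show ((m:ℤ) + n) = ((n:ℤ) + m) by omega]
        have hT : th c h ((n:ℤ) + m) ≠ 0 := (th_pos c h hc hh _ (by omega)).ne'
        field_simp
        simp only [th]
        push_cast
        ring
      · by_cases H2 : k + 1 = n - m
        · rw [if_pos (show m - 1 + k + 2 = n - 1 + 1 by omega),
              if_neg (show ¬((m - 1 + 1) ⊔ (k + 1) - (m - 1 + 1) ⊓ (k + 1) = n - 1 + 1) by omega),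
              if_neg (show ¬(n - 1 + k + 2 = m - 1 + 1) by omega),
              if_pos (show (n - 1 + 1) ⊔ (k + 1) - (n - 1 + 1) ⊓ (k + 1) = m - 1 + 1 by omega),
              if_neg (show ¬(n + m = k + 1) by omega),
              if_pos (show n - m = k + 1 by omega)]
          obtain rfl : k = n - m - 1 := by omega
          rw [show ((n-1:ℕ):ℤ) + 1 = (n:ℤ) by omega, show ((m-1:ℕ):ℤ) + 1 = (m:ℤ) by omega,
              show ((n-m-1:ℕ):ℤ) + 1 = (n:ℤ) - m by omega,
              Nat.cast_sub hm, Nat.cast_sub (show 1 ≤ n by omega),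
              show ((n-m-1:ℕ):ℝ) = (n:ℝ) - m - 1 by
                push_cast [Nat.cast_sub (show 1 ≤ n - m by omega), Nat.cast_sub (show m ≤ n by omega)]; ring]
          simp only [th]
          push_cast
          ring
        · rw [if_neg (show ¬(m - 1 + k + 2 = n - 1 + 1) by omega),
              if_neg (show ¬((m - 1 + 1) ⊔ (k + 1) - (m - 1 + 1) ⊓ (k + 1) = n - 1 + 1) by omega),
              if_neg (show ¬(n - 1 + k + 2 = m - 1 + 1) by omega),
              if_neg (show ¬((n - 1 + 1) ⊔ (k + 1) - (n - 1 + 1) ⊓ (k + 1) = m - 1 + 1) by omega),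
              if_neg (show ¬(n + m = k + 1) by omega),
              if_neg (show ¬(n - m = k + 1) by omega)]
          ring
  · have hFm : Fb m = Finsupp.single (Sum.inl (m-1)) 1 := by rw [Fb]; simp [show m ≠ 0 by omega]
    have hGn : Gb n = Finsupp.single (Sum.inr (n-1)) 1 := by rw [Gb]; simp [show n ≠ 0 by omega]
    rw [hFm, hGn]
    apply key c h hc hh U hU
    clear hU hFm hGn
    intro i
    cases i with
    | inr k =>
      simp [brB, Finsupp.add_apply, Finsupp.smul_apply, Finsupp.neg_apply, Gb_inl, Gb_inr,
        Fb_inl, Fb_inr, smul_eq_mul]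
    | inl k =>
      simp only [brB, Finsupp.add_apply, Finsupp.smul_apply, Finsupp.neg_apply, Gb_inl, Gb_inr,
        Fb_inl, Fb_inr, smul_eq_mul, ipB, dN, sg, if_true]
      by_cases H1 : k + 1 = n + m
      · rw [if_neg (show ¬(m - 1 + k + 2 = n - 1 + 1) by omega),
            if_neg (show ¬(k + 1 < m - 1 + 1) by omega),
            if_pos (show (m - 1 + 1) ⊔ (k + 1) - (m - 1 + 1) ⊓ (k + 1) = n - 1 + 1 by omega),
            if_neg (show ¬(n - 1 + k + 2 = m - 1 + 1) by omega),
            if_pos (show (n - 1 + 1) ⊔ (k + 1) - (n - 1 + 1) ⊓ (k + 1) = m - 1 + 1 by omega),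
            if_neg (show ¬(n - m = k + 1) by omega),
            if_pos (show n + m = k + 1 by omega)]
        obtain rfl : k = n + m - 1 := by omega
        rw [show ((n-1:ℕ):ℤ) + 1 = (n:ℤ) by omega, show ((m-1:ℕ):ℤ) + 1 = (m:ℤ) by omega,
            show ((n+m-1:ℕ):ℤ) + 1 = (n:ℤ) + m by omega,
            Nat.cast_sub hm, Nat.cast_sub (show 1 ≤ n by omega),
            show ((n+m-1:ℕ):ℝ) = (n:ℝ) + m - 1 by push_cast [Nat.cast_sub (show 1 ≤ n + m by omega)]; ring]
        simp only [lam, show ((m:ℤ) + n) = ((n:ℤ) + m) by omega]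
        have hT : th c h ((n:ℤ) + m) ≠ 0 := (th_pos c h hc hh _ (by omega)).ne'
        field_simp
        simp only [th]
        push_cast
        ring
      · by_cases H2 : k + 1 = n - m
        · rw [if_pos (show m - 1 + k + 2 = n - 1 + 1 by omega),
              if_neg (show ¬((m - 1 + 1) ⊔ (k + 1) - (m - 1 + 1) ⊓ (k + 1) = n - 1 + 1) by omega),
              if_neg (show ¬(n - 1 + k + 2 = m - 1 + 1) by omega),
              if_pos (show (n - 1 + 1) ⊔ (k + 1) - (n - 1 + 1) ⊓ (k + 1) = m - 1 + 1 by omega),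
              if_pos (show n - m = k + 1 by omega),
              if_neg (show ¬(n + m = k + 1) by omega)]
          obtain rfl : k = n - m - 1 := by omega
          rw [show ((n-1:ℕ):ℤ) + 1 = (n:ℤ) by omega, show ((m-1:ℕ):ℤ) + 1 = (m:ℤ) by omega,
              show ((n-m-1:ℕ):ℤ) + 1 = (n:ℤ) - m by omega,
              Nat.cast_sub hm, Nat.cast_sub (show 1 ≤ n by omega),
              show ((n-m-1:ℕ):ℝ) = (n:ℝ) - m - 1 by
                push_cast [Nat.cast_sub (show 1 ≤ n - m by omega), Nat.cast_sub (show m ≤ n by omega)]; ring]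
          simp only [th]
          push_cast
          ring
        · rw [if_neg (show ¬(m - 1 + k + 2 = n - 1 + 1) by omega),
              if_neg (show ¬((m - 1 + 1) ⊔ (k + 1) - (m - 1 + 1) ⊓ (k + 1) = n - 1 + 1) by omega),
              if_neg (show ¬(n - 1 + k + 2 = m - 1 + 1) by omega),
              if_neg (show ¬((n - 1 + 1) ⊔ (k + 1) - (n - 1 + 1) ⊓ (k + 1) = m - 1 + 1) by omega),
              if_neg (show ¬(n - m = k + 1) by omega),
              if_neg (show ¬(n + m = k + 1) by omega)]
          ring
  · have hGm : Gb m = Finsupp.single (Sum.inr (m-1)) 1 := by rw [Gb]; simp [show m ≠ 0 by omega]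
    have hGn : Gb n = Finsupp.single (Sum.inr (n-1)) 1 := by rw [Gb]; simp [show n ≠ 0 by omega]
    rw [hGm, hGn]
    apply key c h hc hh U hU
    clear hU hGm hGn
    intro i
    cases i with
    | inl k =>
      simp [brB, Finsupp.add_apply, Finsupp.smul_apply, Finsupp.neg_apply, Gb_inl, Gb_inr,
        Fb_inl, Fb_inr, smul_eq_mul]
    | inr k =>
      simp only [brB, Finsupp.add_apply, Finsupp.smul_apply, Finsupp.neg_apply, Gb_inl, Gb_inr,
        Fb_inl, Fb_inr, smul_eq_mul, ipB, dN, sg, if_true]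
      by_cases H1 : k + 1 = n + m
      · rw [if_neg (show ¬(m - 1 + k + 2 = n - 1 + 1) by omega),
            if_neg (show ¬(k + 1 < m - 1 + 1) by omega),
            if_pos (show (m - 1 + 1) ⊔ (k + 1) - (m - 1 + 1) ⊓ (k + 1) = n - 1 + 1 by omega),
            if_neg (show ¬(n - 1 + k + 2 = m - 1 + 1) by omega),
            if_neg (show ¬(k + 1 < n - 1 + 1) by omega),
            if_pos (show (n - 1 + 1) ⊔ (k + 1) - (n - 1 + 1) ⊓ (k + 1) = m - 1 + 1 by omega),
            if_neg (show ¬(n - m = k + 1) by omega),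
            if_pos (show n + m = k + 1 by omega)]
        obtain rfl : k = n + m - 1 := by omega
        rw [show ((n-1:ℕ):ℤ) + 1 = (n:ℤ) by omega, show ((m-1:ℕ):ℤ) + 1 = (m:ℤ) by omega,
            show ((n+m-1:ℕ):ℤ) + 1 = (n:ℤ) + m by omega,
            Nat.cast_sub hm, Nat.cast_sub (show 1 ≤ n by omega),
            show ((n+m-1:ℕ):ℝ) = (n:ℝ) + m - 1 by push_cast [Nat.cast_sub (show 1 ≤ n + m by omega)]; ring]
        simp only [lam, show ((m:ℤ) + n) = ((n:ℤ) + m) by omega]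
        have hT : th c h ((n:ℤ) + m) ≠ 0 := (th_pos c h hc hh _ (by omega)).ne'
        field_simp
        simp only [th]
        push_cast
        ring
      · by_cases H2 : k + 1 = n - m
        · rw [if_pos (show m - 1 + k + 2 = n - 1 + 1 by omega),
              if_neg (show ¬((m - 1 + 1) ⊔ (k + 1) - (m - 1 + 1) ⊓ (k + 1) = n - 1 + 1) by omega),
              if_neg (show ¬(n - 1 + k + 2 = m - 1 + 1) by omega),
              if_pos (show k + 1 < n - 1 + 1 by omega),
              if_pos (show (n - 1 + 1) ⊔ (k + 1) - (n - 1 + 1) ⊓ (k + 1) = m - 1 + 1 by omega),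
              if_pos (show n - m = k + 1 by omega),
              if_neg (show ¬(n + m = k + 1) by omega)]
          obtain rfl : k = n - m - 1 := by omega
          rw [show ((n-1:ℕ):ℤ) + 1 = (n:ℤ) by omega, show ((m-1:ℕ):ℤ) + 1 = (m:ℤ) by omega,
              show ((n-m-1:ℕ):ℤ) + 1 = (n:ℤ) - m by omega,
              Nat.cast_sub hm, Nat.cast_sub (show 1 ≤ n by omega),
              show ((n-m-1:ℕ):ℝ) = (n:ℝ) - m - 1 by
                push_cast [Nat.cast_sub (show 1 ≤ n - m by omega), Nat.cast_sub (show m ≤ n by omega)]; ring]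
          simp only [th]
          push_cast
          ring
        · rw [if_neg (show ¬(m - 1 + k + 2 = n - 1 + 1) by omega),
              if_neg (show ¬((m - 1 + 1) ⊔ (k + 1) - (m - 1 + 1) ⊓ (k + 1) = n - 1 + 1) by omega),
              if_neg (show ¬(n - 1 + k + 2 = m - 1 + 1) by omega),
              if_neg (show ¬((n - 1 + 1) ⊔ (k + 1) - (n - 1 + 1) ⊓ (k + 1) = m - 1 + 1) by omega),
              if_neg (show ¬(n - m = k + 1) by omega),
              if_neg (show ¬(n + m = k + 1) by omega)]
          ring
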